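/- Let Γ be a finite simple graph of order n with maximum degree δ_1 ≥ 1. The coefficient A_{−δ_1+1}(Γ) of x^{n−δ_1+1} in the alliance polynomial equals the number of vertices of Γ of degree δ_1 − 1. -/
import Mathlib

open Finset Polynomial
open scoped Classical

noncomputable section

variable {V : Type*} [Fintype V]

/-- Number of neighbors of `v` inside `S` (as an integer). -/
def degIn (G : SimpleGraph V) (S : Finset V) (v : V) : ℤ :=
  ((S.filter (fun u => G.Adj v u)).card : ℤ)

/-- Number of neighbors of `v` outside `S` (as an integer). -/
def degOut (G : SimpleGraph V) (S : Finset V) (v : V) : ℤ :=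
  ((Sᶜ.filter (fun u => G.Adj v u)).card : ℤ)

/-- The exact index of alliance of `S`. -/
def exactIndex (G : SimpleGraph V) (S : Finset V) : ℤ :=
  if h : S.Nonempty then S.inf' h (fun v => degIn G S v - degOut G S v) else 0

/-- Nonempty vertex subsets inducing a connected subgraph. -/
def goodSets (G : SimpleGraph V) : Finset (Finset V) :=
  Finset.univ.filter (fun S => S.Nonempty ∧ (G.induce (S : Set V)).Connected)

/-- The alliance polynomial. -/
def alliancePoly (G : SimpleGraph V) : Polynomial ℤ :=
  ∑ S ∈ goodSets G, X ^ (((Fintype.card V : ℤ) + exactIndex G S).toNat)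

/-- `A_k(Γ)`: number of connected exact defensive `k`-alliances. -/
def allianceCount (G : SimpleGraph V) (k : ℤ) : ℕ :=
  ((goodSets G).filter (fun S => exactIndex G S = k)).card

end

section Aux

variable {V : Type*} [Fintype V]

lemma degIn_add_degOut (G : SimpleGraph V) (S : Finset V) (v : V) :
    degIn G S v + degOut G S v = (G.degree v : ℤ) := by
  have : (S.filter (fun u => G.Adj v u)).card + (Sᶜ.filter (fun u => G.Adj v u)).card
      = (Finset.univ.filter (fun u => G.Adj v u)).card := by
    classical
    rw [← Finset.card_union_of_disjoint, ← Finset.filter_union, Finset.union_compl]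
    exact Finset.disjoint_filter_filter disjoint_compl_right
  have hdeg : G.degree v = (Finset.univ.filter (fun u => G.Adj v u)).card := by
    rw [← SimpleGraph.card_neighborFinset_eq_degree]
    congr 1
    ext u
    simp [SimpleGraph.mem_neighborFinset]
  simp only [degIn, degOut, hdeg]
  exact_mod_cast this

lemma exactIndex_singleton (G : SimpleGraph V) (v : V) :
    exactIndex G {v} = -(G.degree v : ℤ) := by
  classical
  rw [exactIndex, dif_pos (Finset.singleton_nonempty v), Finset.inf'_singleton]
  have h0 : degIn G {v} v = 0 := by
    simp [degIn, Finset.filter_singleton, G.irrefl]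
  have h1 : degIn G {v} v + degOut G {v} v = (G.degree v : ℤ) := degIn_add_degOut G {v} v
  omega

lemma singleton_connected (G : SimpleGraph V) (v : V) :
    (G.induce ({v} : Set V)).Connected := by
  constructor
  intro a b
  have : a = b := Subsingleton.elim a b
  exact this ▸ SimpleGraph.Reachable.refl a

lemma exists_adj_of_connected (G : SimpleGraph V) {S : Finset V}
    (hc : (G.induce (S : Set V)).Connected) {v : V} (hv : v ∈ S) (h2 : 2 ≤ S.card) :
    ∃ u ∈ S, G.Adj v u := by
  classical
  obtain ⟨u, hu, hne⟩ := Finset.exists_mem_ne h2 v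
  have hr : (G.induce (S : Set V)).Reachable ⟨v, hv⟩ ⟨u, hu⟩ := hc.preconnected _ _
  have hne' : (⟨v, hv⟩ : (S : Set V)) ≠ ⟨u, hu⟩ := by
    simp [Subtype.ext_iff]; exact fun h => hne h.symm
  obtain ⟨w⟩ := hr
  have hn : ¬ w.Nil := SimpleGraph.Walk.not_nil_of_ne hne'
  have hadj := w.adj_snd hn
  refine ⟨((w.getVert 1 : (S : Set V)) : V), (w.getVert 1).2, ?_⟩
  simpa [SimpleGraph.comap_adj] using hadj

end Aux

/-- `A_{-δ₁+1}(Γ)` is the number of vertices of degree `δ₁ - 1`. -/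
theorem allianceCount_neg_maxDegree_add_one {V : Type*} [Fintype V] (G : SimpleGraph V)
    (h : 1 ≤ G.maxDegree) :
    allianceCount G (-(G.maxDegree : ℤ) + 1)
      = (Finset.univ.filter (fun v => G.degree v = G.maxDegree - 1)).card := by
  classical
  set δ := G.maxDegree with hδ
  have key : ((goodSets G).filter (fun S => exactIndex G S = -(δ : ℤ) + 1))
      = (Finset.univ.filter (fun v => G.degree v = δ - 1)).image (fun v => ({v} : Finset V)) := by
    ext S
    simp only [Finset.mem_filter, Finset.mem_image, Finset.mem_univ, true_and, goodSets]
    constructor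
    · rintro ⟨⟨hne, hconn⟩, hk⟩
      rcases eq_or_lt_of_le (Finset.one_le_card.mpr hne) with h1 | h2
      · obtain ⟨v, rfl⟩ := Finset.card_eq_one.mp h1.symm
        refine ⟨v, ?_, rfl⟩
        rw [exactIndex_singleton] at hk
        have : (G.degree v : ℤ) = (δ : ℤ) - 1 := by omega
        omega
      · exfalso
        have hlb : ∀ v ∈ S, (2 : ℤ) - δ ≤ degIn G S v - degOut G S v := by
          intro v hv
          obtain ⟨u, hu, hadj⟩ := exists_adj_of_connected G hconn hv h2
          have h1 : (1 : ℤ) ≤ degIn G S v := by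
            have : (S.filter (fun u => G.Adj v u)).Nonempty := ⟨u, Finset.mem_filter.mpr ⟨hu, hadj⟩⟩
            have := Finset.card_pos.mpr this
            simp only [degIn]
            exact_mod_cast this
          have hsum := degIn_add_degOut G S v
          have hle : (G.degree v : ℤ) ≤ (δ : ℤ) := by
            exact_mod_cast G.degree_le_maxDegree v
          omega
        have : (2 : ℤ) - δ ≤ exactIndex G S := by
          rw [exactIndex, dif_pos hne]
          exact Finset.le_inf' hne _ hlb
        omega
    · rintro ⟨v, hv, rfl⟩
      refine ⟨⟨Finset.singleton_nonempty v, ?_⟩, ?_⟩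
      · rw [Finset.coe_singleton]; exact singleton_connected G v
      · rw [exactIndex_singleton, hv]
        push_cast [Nat.cast_sub h]
        ring
  rw [allianceCount, key,
    Finset.card_image_of_injective _ Finset.singleton_injective]
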